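/- Under the assumptions: (a) M ∈ ℝ^{N×N} is symmetric positive definite with condition number κ and M-norm ‖Z‖_M² = tr(Zᵀ M Z) on ℝ^{N×p}; (b) the row indices {1,…,N} are partitioned into n nonempty disjoint blocks, T : ℝ^{N×p} → ℝ^{N×p} is nonexpansive with respect to ‖·‖_M, S = I − T, and S_i Ẑ denotes the block-i restriction of S Ẑ; (c) Z* satisfies TZ* = Z*; (d) q_1,…,q_n > 0 satisfy Σ_i q_i = 1, q_min = min_i q_i; (e) τ ≥ 1, Z^{k−τ},…,Z^k ∈ ℝ^{N×p}, J ⊆ {k−τ,…,k−1}, Ẑ = Z^k + Σ_{d∈J}(Z^d − Z^{d+1}); and (f) the step size satisfies 0 < η < n·q_min/(2τ·√(κ·q_min) + κ); set c = √(q_min/κ) and Z^{k+1,i} = Z^k − (η/(n q_i)) S_i Ẑ. Then Σ_{i=1}^n q_i · [ ‖Z^{k+1,i} − Z*‖_M² + c·Σ_{d=k+1−τ}^{k−1} (d−(k+1−τ)+1)·‖Z^d − Z^{d+1}‖_M² + c·τ·‖Z^k − Z^{k+1,i}‖_M² ] ≤ ‖Z^k − Z*‖_M² + c·Σ_{d=k−τ}^{k−1}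 (d−(k−τ)+1)·‖Z^d − Z^{d+1}‖_M²; i.e., the sequence of stacked iterates is stochastically Fejér monotone in the U-metric. -/

import Mathlib

open Matrix

/-- The squared `M`-norm `‖Z‖_M² = tr(Zᵀ M Z)` on `ℝ^{N×p}`. -/
noncomputable def Mnorm2 {N p : ℕ} (M : Matrix (Fin N) (Fin N) ℝ)
    (Z : Matrix (Fin N) (Fin p) ℝ) : ℝ :=
  (Zᵀ * M * Z).trace

/-- `blockRestrict b i A` agrees with `A` on the rows in block `i` (rows `j` with
`b j = i`) and is zero elsewhere. -/
def blockRestrict {N p n : ℕ} (b : Fin N → Fin n) (i : Fin n)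
    (A : Matrix (Fin N) (Fin p) ℝ) : Matrix (Fin N) (Fin p) ℝ :=
  Matrix.of fun j l => if b j = i then A j l else 0

/-!
Write `S = I - T`, `a = η/n` and `Sᵢ` for the block restrictions. Since `Z^{k+1,i} - Z^k` is
`-(a/qᵢ) Sᵢ Ẑ`, averaging `‖Z^{k+1,i} - Z*‖²_M` over `i` gives
`‖Z^k - Z*‖²_M - 2a⟨Z^k - Z*, SẐ⟩_M` plus the expected squared step, which is at most
`a² κ/q_min ‖SẐ‖²_M`. Nonexpansiveness of `T` and `TZ* = Z*` give
`‖SẐ‖²_M ≤ 2⟨Ẑ - Z*, SẐ⟩_M`; replacing `Ẑ` by `Z^k` costs at most `τ` delay terms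
`⟨Z^d - Z^{d+1}, SẐ⟩_M`, each split by Young's inequality with weight `c/a`. Shifting the
window of the delay potential by one step releases exactly `c Σ_d ‖Z^d - Z^{d+1}‖²_M`, which
absorbs the Young terms, and the step-size bound makes the remaining coefficient of
`‖SẐ‖²_M` nonpositive.
-/

open scoped MatrixOrder

lemma Matrix.IsHermitian.le_smul_one {n : Type*} [Fintype n] [DecidableEq n]
    {M : Matrix n n ℝ} (hM : M.IsHermitian) {r : ℝ}
    (h : r ∈ upperBounds (Set.range hM.eigenvalues)) : M ≤ r • 1 := by
  rw [← Algebra.algebraMap_eq_smul_one]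
  refine le_algebraMap_of_spectrum_le (fun x hx => h ?_) hM.isSelfAdjoint
  rwa [← hM.spectrum_real_eq_range_eigenvalues]

lemma Matrix.IsHermitian.smul_one_le {n : Type*} [Fintype n] [DecidableEq n]
    {M : Matrix n n ℝ} (hM : M.IsHermitian) {r : ℝ}
    (h : r ∈ lowerBounds (Set.range hM.eigenvalues)) : r • 1 ≤ M := by
  rw [← Algebra.algebraMap_eq_smul_one]
  refine algebraMap_le_of_le_spectrum (fun x hx => h ?_) hM.isSelfAdjoint
  rwa [← hM.spectrum_real_eq_range_eigenvalues]

section Mnorm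

variable {N p : ℕ}

noncomputable def Minner (M : Matrix (Fin N) (Fin N) ℝ) :
    LinearMap.BilinForm ℝ (Matrix (Fin N) (Fin p) ℝ) :=
  LinearMap.mk₂ ℝ (fun X Y => (Xᵀ * M * Y).trace)
    (fun X X' Y => by simp [Matrix.add_mul]) (fun r X Y => by simp [Matrix.smul_mul])
    (fun X Y Y' => by simp [Matrix.mul_add]) (fun r X Y => by simp)

lemma Mnorm2_eq_Minner (M : Matrix (Fin N) (Fin N) ℝ) (X : Matrix (Fin N) (Fin p) ℝ) :
    Mnorm2 M X = Minner M X X := rfl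

lemma Minner_comm {M : Matrix (Fin N) (Fin N) ℝ} (hM : M.IsSymm)
    (X Y : Matrix (Fin N) (Fin p) ℝ) : Minner M X Y = Minner M Y X := by
  change (Xᵀ * M * Y).trace = (Yᵀ * M * X).trace
  rw [← trace_transpose, transpose_mul, transpose_mul, transpose_transpose, hM.eq,
    Matrix.mul_assoc]

lemma Mnorm2_sub {M : Matrix (Fin N) (Fin N) ℝ} (hM : M.IsSymm)
    (X Y : Matrix (Fin N) (Fin p) ℝ) :
    Mnorm2 M (X - Y) = Mnorm2 M X - 2 * Minner M X Y + Mnorm2 M Y := by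
  simp only [Mnorm2_eq_Minner, map_sub, LinearMap.sub_apply, Minner_comm hM Y X]
  ring

lemma Mnorm2_smul_right (M : Matrix (Fin N) (Fin N) ℝ) (r : ℝ)
    (X : Matrix (Fin N) (Fin p) ℝ) : Mnorm2 M (r • X) = r ^ 2 * Mnorm2 M X := by
  simp only [Mnorm2_eq_Minner, map_smul, LinearMap.smul_apply, smul_eq_mul]
  ring

lemma Mnorm2_smul_left (r : ℝ) (M : Matrix (Fin N) (Fin N) ℝ)
    (X : Matrix (Fin N) (Fin p) ℝ) : Mnorm2 (r • M) X = r * Mnorm2 M X := by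
  simp [Mnorm2]

lemma Mnorm2_nonneg {M : Matrix (Fin N) (Fin N) ℝ} (hM : M.PosSemidef)
    (X : Matrix (Fin N) (Fin p) ℝ) : 0 ≤ Mnorm2 M X := by
  simpa [Mnorm2, conjTranspose_eq_transpose_of_trivial] using
    (hM.conjTranspose_mul_mul_same X).trace_nonneg

lemma Mnorm2_mono {M M' : Matrix (Fin N) (Fin N) ℝ} (h : M ≤ M')
    (X : Matrix (Fin N) (Fin p) ℝ) : Mnorm2 M X ≤ Mnorm2 M' X := by
  have := Mnorm2_nonneg (le_iff.mp h) X
  rw [Mnorm2, Matrix.mul_sub, Matrix.sub_mul, trace_sub] at this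
  exact sub_nonneg.mp this

lemma two_mul_Minner_le {M : Matrix (Fin N) (Fin N) ℝ} (hM : M.PosSemidef) {ρ : ℝ}
    (hρ : 0 < ρ) (X Y : Matrix (Fin N) (Fin p) ℝ) :
    2 * Minner M X Y ≤ ρ * Mnorm2 M X + ρ⁻¹ * Mnorm2 M Y := by
  have h := Mnorm2_nonneg hM (ρ • X - Y)
  rw [Mnorm2_sub (isHermitian_iff_isSymm.mp hM.isHermitian), Mnorm2_smul_right, map_smul,
    LinearMap.smul_apply, smul_eq_mul] at h
  have key : ρ * (2 * Minner M X Y) ≤ ρ * (ρ * Mnorm2 M X + ρ⁻¹ * Mnorm2 M Y) := by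
    rw [mul_add, ← mul_assoc ρ ρ⁻¹, mul_inv_cancel₀ hρ.ne']
    nlinarith
  exact le_of_mul_le_mul_left key hρ

lemma two_mul_Minner_sum_le {ι : Type*} {M : Matrix (Fin N) (Fin N) ℝ} (hM : M.PosSemidef)
    {ρ : ℝ} (hρ : 0 < ρ) (J : Finset ι) (Y : ι → Matrix (Fin N) (Fin p) ℝ)
    (X : Matrix (Fin N) (Fin p) ℝ) :
    2 * Minner M (∑ d ∈ J, Y d) X
      ≤ ρ * ∑ d ∈ J, Mnorm2 M (Y d) + J.card * (ρ⁻¹ * Mnorm2 M X) := by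
  rw [map_sum, LinearMap.sum_apply, Finset.mul_sum, Finset.mul_sum, ← nsmul_eq_mul,
    ← Finset.sum_const, ← Finset.sum_add_distrib]
  exact Finset.sum_le_sum fun d _ => two_mul_Minner_le hM hρ (Y d) X

lemma Mnorm2_sub_apply_le_two_mul_Minner {M : Matrix (Fin N) (Fin N) ℝ} (hM : M.IsSymm)
    {T : Matrix (Fin N) (Fin p) ℝ → Matrix (Fin N) (Fin p) ℝ}
    (hT : ∀ X Y, Mnorm2 M (T X - T Y) ≤ Mnorm2 M (X - Y)) {Z : Matrix (Fin N) (Fin p) ℝ}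
    (hZ : T Z = Z) (X : Matrix (Fin N) (Fin p) ℝ) :
    Mnorm2 M (X - T X) ≤ 2 * Minner M (X - Z) (X - T X) := by
  have h := hT X Z
  rw [hZ, show T X - Z = (X - Z) - (X - T X) by abel, Mnorm2_sub hM] at h
  linarith

end Mnorm

section Blocks

variable {N p n : ℕ}

lemma sum_blockRestrict (b : Fin N → Fin n) (A : Matrix (Fin N) (Fin p) ℝ) :
    ∑ i, blockRestrict b i A = A := by
  ext j l
  simp [Matrix.sum_apply, blockRestrict]

lemma sum_Mnorm2_one_blockRestrict (b : Fin N → Fin n) (A : Matrix (Fin N) (Fin p) ℝ) :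
    ∑ i, Mnorm2 1 (blockRestrict b i A) = Mnorm2 1 A := by
  simp only [Mnorm2, Matrix.mul_one, trace, diag_apply, mul_apply, transpose_apply,
    blockRestrict, of_apply]
  rw [Finset.sum_comm]
  refine Finset.sum_congr rfl fun l _ => ?_
  rw [Finset.sum_comm]
  refine Finset.sum_congr rfl fun j _ => ?_
  simp [ite_mul, mul_ite]

lemma sum_Mnorm2_blockRestrict_le {M : Matrix (Fin N) (Fin N) ℝ} {lmin lmax : ℝ}
    (hlmin0 : 0 < lmin) (hlmin : lmin • 1 ≤ M) (hlmax : M ≤ lmax • 1) (b : Fin N → Fin n)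
    (A : Matrix (Fin N) (Fin p) ℝ) :
    ∑ i, Mnorm2 M (blockRestrict b i A) ≤ lmax / lmin * Mnorm2 M A := by
  have hblocks : ∑ i, Mnorm2 M (blockRestrict b i A) ≤ lmax * Mnorm2 1 A := by
    rw [← sum_Mnorm2_one_blockRestrict b A, Finset.mul_sum]
    exact Finset.sum_le_sum fun i _ =>
      (Mnorm2_mono hlmax _).trans_eq (Mnorm2_smul_left _ _ _)
  have hlower : lmin * Mnorm2 1 A ≤ Mnorm2 M A :=
    (Mnorm2_smul_left _ _ _).symm.trans_le (Mnorm2_mono hlmin A)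
  have hupper : Mnorm2 M A ≤ lmax * Mnorm2 1 A :=
    (Mnorm2_mono hlmax A).trans_eq (Mnorm2_smul_left _ _ _)
  rw [div_mul_eq_mul_div, le_div_iff₀ hlmin0]
  rcases (Mnorm2_nonneg PosSemidef.one A).eq_or_lt with hA | hA
  · rw [← hA, mul_zero] at hblocks hlower hupper
    rw [le_antisymm hupper hlower, mul_zero]
    exact mul_nonpos_of_nonpos_of_nonneg hblocks hlmin0.le
  · have hlmax0 : 0 < lmax := by nlinarith
    nlinarith

end Blocks

section Averaging

variable {N p : ℕ} {ι : Type*} [Fintype ι]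

lemma sum_mul_Mnorm2_sub_smul {M : Matrix (Fin N) (Fin N) ℝ} (hM : M.IsSymm)
    {q α : ι → ℝ} {a : ℝ} (hq : ∑ i, q i = 1) (hqα : ∀ i, q i * α i = a)
    (X : Matrix (Fin N) (Fin p) ℝ) (S : ι → Matrix (Fin N) (Fin p) ℝ) :
    ∑ i, q i * Mnorm2 M (X - α i • S i)
      = Mnorm2 M X - 2 * a * Minner M X (∑ i, S i) + ∑ i, q i * Mnorm2 M (α i • S i) := by
  have hterm : ∀ i, q i * Mnorm2 M (X - α i • S i)
      = q i * Mnorm2 M X - 2 * a * Minner M X (S i) + q i * Mnorm2 M (α i • S i) := by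
    intro i
    rw [Mnorm2_sub hM, map_smul, smul_eq_mul, ← hqα i]
    ring
  rw [Finset.sum_congr rfl fun i _ => hterm i, Finset.sum_add_distrib, Finset.sum_sub_distrib,
    ← Finset.sum_mul, hq, one_mul, map_sum, Finset.mul_sum]

lemma sum_mul_Mnorm2_smul_le {M : Matrix (Fin N) (Fin N) ℝ} (hM : M.PosSemidef)
    {q α : ι → ℝ} {a qmin : ℝ} (hqmin : 0 < qmin) (hq : ∀ i, qmin ≤ q i)
    (hqα : ∀ i, q i * α i = a) (S : ι → Matrix (Fin N) (Fin p) ℝ) :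
    ∑ i, q i * Mnorm2 M (α i • S i) ≤ a ^ 2 / qmin * ∑ i, Mnorm2 M (S i) := by
  rw [Finset.mul_sum]
  refine Finset.sum_le_sum fun i _ => ?_
  have hqi : 0 < q i := hqmin.trans_le (hq i)
  rw [Mnorm2_smul_right, ← mul_assoc, ← hqα i]
  refine mul_le_mul_of_nonneg_right ?_ (Mnorm2_nonneg hM _)
  rw [le_div_iff₀ hqmin]
  nlinarith [hq i, mul_nonneg hqi.le (sq_nonneg (α i))]

end Averaging

lemma le_two_mul_Minner_delayed {N p : ℕ} {M : Matrix (Fin N) (Fin N) ℝ} (hM : M.PosSemidef)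
    {T : Matrix (Fin N) (Fin p) ℝ → Matrix (Fin N) (Fin p) ℝ}
    (hT : ∀ X Y, Mnorm2 M (T X - T Y) ≤ Mnorm2 M (X - Y)) {Zstar : Matrix (Fin N) (Fin p) ℝ}
    (hfix : T Zstar = Zstar) {ρ : ℝ} (hρ : 0 < ρ) {τ k : ℕ}
    {Z : ℕ → Matrix (Fin N) (Fin p) ℝ} {J : Finset ℕ} (hJ : J ⊆ Finset.Ico (k - τ) k)
    {Zhat : Matrix (Fin N) (Fin p) ℝ}
    (hZhat : Zhat = Z k + ∑ d ∈ J, (Z d - Z (d + 1))) :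
    Mnorm2 M (Zhat - T Zhat) - ρ * ∑ d ∈ Finset.Ico (k - τ) k, Mnorm2 M (Z d - Z (d + 1))
        - τ * (ρ⁻¹ * Mnorm2 M (Zhat - T Zhat))
      ≤ 2 * Minner M (Z k - Zstar) (Zhat - T Zhat) := by
  have hfixed := Mnorm2_sub_apply_le_two_mul_Minner (isHermitian_iff_isSymm.mp hM.isHermitian)
    hT hfix Zhat
  have hdelay := two_mul_Minner_sum_le hM hρ J (fun d => Z d - Z (d + 1)) (Zhat - T Zhat)
  rw [show Zhat - Zstar = (Z k - Zstar) + ∑ d ∈ J, (Z d - Z (d + 1)) by rw [hZhat]; abel,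
    map_add, LinearMap.add_apply] at hfixed
  have hsum : ∑ d ∈ J, Mnorm2 M (Z d - Z (d + 1))
      ≤ ∑ d ∈ Finset.Ico (k - τ) k, Mnorm2 M (Z d - Z (d + 1)) :=
    Finset.sum_le_sum_of_subset_of_nonneg hJ fun d _ _ => Mnorm2_nonneg hM _
  have hcard : (J.card : ℝ) ≤ τ := by
    have := Finset.card_le_card hJ
    rw [Nat.card_Ico] at this
    exact_mod_cast this.trans tsub_tsub_le
  have := mul_le_mul_of_nonneg_left hsum hρ.le
  have := mul_le_mul_of_nonneg_right hcard
    (mul_nonneg (inv_nonneg.mpr hρ.le) (Mnorm2_nonneg hM (Zhat - T Zhat)))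
  linarith

lemma sum_Ico_natSub_succ_mul_eq (f : ℕ → ℝ) (m k : ℕ) :
    ∑ d ∈ Finset.Ico m k, ((d - m + 1 : ℕ) : ℝ) * f d
      = ∑ d ∈ Finset.Ico (m + 1) k, ((d - (m + 1) + 1 : ℕ) : ℝ) * f d
        + ∑ d ∈ Finset.Ico m k, f d := by
  rcases lt_or_ge m k with hmk | hkm
  · have hshift : ∀ d ∈ Finset.Ico (m + 1) k,
        ((d - m + 1 : ℕ) : ℝ) * f d = ((d - (m + 1) + 1 : ℕ) : ℝ) * f d + f d := by
      intro d hd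
      rw [show d - m + 1 = (d - (m + 1) + 1) + 1 by grind]
      push_cast
      ring
    rw [← Finset.insert_Ico_add_one_left_eq_Ico hmk, Finset.sum_insert (by simp),
      Finset.sum_insert (by simp), Finset.sum_congr rfl hshift, Finset.sum_add_distrib]
    simp
    ring
  · simp [Finset.Ico_eq_empty_of_le hkm, Finset.Ico_eq_empty_of_le (hkm.trans m.le_succ)]

lemma div_mul_two_mul_sqrt_add_one_lt {n κ qmin τ η : ℝ} (hn : 0 < n) (hκ : 0 < κ)
    (hqmin : 0 < qmin) (hτ : 0 ≤ τ) (hη : η < n * qmin / (2 * τ * √(κ * qmin) + κ)) :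
    η / n * (2 * τ * √(qmin / κ) + 1) < qmin / κ := by
  have hsq := Real.sq_sqrt (div_pos hqmin hκ).le
  set c := √(qmin / κ)
  have hqmin_eq : qmin = κ * c ^ 2 := by rw [hsq]; field_simp
  have hroot : √(κ * qmin) = κ * c := by
    rw [hqmin_eq, ← mul_assoc, ← sq, Real.sqrt_mul (sq_nonneg κ), Real.sqrt_sq hκ.le,
      Real.sqrt_sq (Real.sqrt_nonneg _)]
  rw [hroot, lt_div_iff₀ (by positivity), hqmin_eq] at hη
  rw [div_mul_eq_mul_div, div_lt_iff₀ hn, ← hsq]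
  refine lt_of_mul_lt_mul_left ?_ hκ.le
  linarith

-- `a (2τc + 1) < c²` is the positivity of the damping coefficient
-- `1/η - 2τ√κ/(n√q_min) - κ/(n q_min)`.
lemma fejer_scalar_inequality {a c κ qmin τ s δ R P : ℝ} (ha : 0 < a) (hκ : 0 < κ)
    (hqmin : 0 < qmin) (hτ : 0 ≤ τ) (hs : 0 ≤ s) (hc : c = √(qmin / κ))
    (hstep : a * (2 * τ * c + 1) < qmin / κ) (hR : R ≤ a ^ 2 / qmin * (κ * s))
    (hP : s - c / a * δ - τ * (a / c * s) ≤ 2 * P) :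
    R + c * τ * R ≤ 2 * a * P + c * δ := by
  have hc0 : 0 < c := hc ▸ Real.sqrt_pos.mpr (div_pos hqmin hκ)
  have hc2 : c ^ 2 = qmin / κ := hc ▸ Real.sq_sqrt (div_pos hqmin hκ).le
  have hR' : c ^ 2 * R ≤ a ^ 2 * s := by
    rw [div_mul_eq_mul_div, le_div_iff₀ hqmin] at hR
    rw [hc2, div_mul_eq_mul_div, div_le_iff₀ hκ]
    linarith
  have hP' : a * c * s - c ^ 2 * δ - τ * a ^ 2 * s ≤ 2 * a * c * P := by
    have := mul_le_mul_of_nonneg_left hP (mul_pos ha hc0).le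
    field_simp at this
    linarith
  rw [← hc2] at hstep
  have hRτ := mul_le_mul_of_nonneg_left hR' (by positivity : (0:ℝ) ≤ 1 + c * τ)
  have hstep' := mul_le_mul_of_nonneg_right hstep.le (by positivity : (0:ℝ) ≤ a * s)
  refine le_of_mul_le_mul_left ?_ (by positivity : (0:ℝ) < c ^ 2)
  nlinarith

theorem stochastic_fejer_monotonicity_general (N p n : ℕ)
    (M : Matrix (Fin N) (Fin N) ℝ) (hM : M.PosDef)
    (lmax lmin : ℝ)
    (hlmax : IsGreatest (Set.range hM.isHermitian.eigenvalues) lmax)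
    (hlmin : IsLeast (Set.range hM.isHermitian.eigenvalues) lmin)
    (b : Fin N → Fin n)
    (T : Matrix (Fin N) (Fin p) ℝ → Matrix (Fin N) (Fin p) ℝ)
    (hT : ∀ X Y : Matrix (Fin N) (Fin p) ℝ,
      Mnorm2 M (T X - T Y) ≤ Mnorm2 M (X - Y))
    (Zstar : Matrix (Fin N) (Fin p) ℝ) (hfix : T Zstar = Zstar)
    (q : Fin n → ℝ) (hq : ∀ i, 0 < q i) (hqsum : ∑ i, q i = 1)
    (qmin : ℝ) (hqmin : IsLeast (Set.range q) qmin)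
    (τ k : ℕ) (hτk : τ ≤ k)
    (Z : ℕ → Matrix (Fin N) (Fin p) ℝ)
    (J : Finset ℕ) (hJ : J ⊆ Finset.Ico (k - τ) k)
    (Zhat : Matrix (Fin N) (Fin p) ℝ)
    (hZhat : Zhat = Z k + ∑ d ∈ J, (Z d - Z (d + 1)))
    (η : ℝ) (hη : 0 < η)
    (hηbound : η < (n : ℝ) * qmin /
      (2 * (τ : ℝ) * Real.sqrt ((lmax / lmin) * qmin) + lmax / lmin))
    (c : ℝ) (hc : c = Real.sqrt (qmin / (lmax / lmin)))
    (Znext : Fin n → Matrix (Fin N) (Fin p) ℝ)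
    (hZnext : ∀ i, Znext i = Z k - (η / ((n : ℝ) * q i)) • blockRestrict b i (Zhat - T Zhat)) :
    ∑ i, q i *
        (Mnorm2 M (Znext i - Zstar)
          + c * ∑ d ∈ Finset.Ico (k + 1 - τ) k,
              ((d - (k + 1 - τ) + 1 : ℕ) : ℝ) * Mnorm2 M (Z d - Z (d + 1))
          + c * (τ : ℝ) * Mnorm2 M (Z k - Znext i))
      ≤ Mnorm2 M (Z k - Zstar)
        + c * ∑ d ∈ Finset.Ico (k - τ) k,
            ((d - (k - τ) + 1 : ℕ) : ℝ) * Mnorm2 M (Z d - Z (d + 1)) := by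
  have hpsd := hM.posSemidef
  have hlmin0 : 0 < lmin := by obtain ⟨j, rfl⟩ := hlmin.1; exact hM.eigenvalues_pos j
  have hlmax0 : 0 < lmax := by obtain ⟨j, rfl⟩ := hlmax.1; exact hM.eigenvalues_pos j
  obtain ⟨⟨imin, hqmin_eq⟩, hqmin_le⟩ := hqmin
  have hqmin0 : 0 < qmin := hqmin_eq ▸ hq imin
  have hn : (0 : ℝ) < n := Nat.cast_pos.mpr (Fin.pos imin)
  set S := Zhat - T Zhat
  set α := fun i => η / ((n : ℝ) * q i)
  have hα : ∀ i, q i * α i = η / n := fun i => by simp only [α]; field_simp [(hq i).ne']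
  have hR := (sum_mul_Mnorm2_smul_le hpsd hqmin0 (fun i => hqmin_le ⟨i, rfl⟩) hα _).trans
    (mul_le_mul_of_nonneg_left (sum_Mnorm2_blockRestrict_le hlmin0
      (hM.isHermitian.smul_one_le hlmin.2) (hM.isHermitian.le_smul_one hlmax.2) b S)
      (by positivity))
  have hP := le_two_mul_Minner_delayed hpsd hT hfix (ρ := c / (η / n))
    (div_pos (hc ▸ Real.sqrt_pos.mpr (by positivity)) (by positivity)) hJ hZhat
  have hshift := sum_Ico_natSub_succ_mul_eq (fun d => Mnorm2 M (Z d - Z (d + 1))) (k - τ) k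
  rw [show k - τ + 1 = k + 1 - τ by omega] at hshift
  have hstep := hc ▸ div_mul_two_mul_sqrt_add_one_lt hn (div_pos hlmax0 hlmin0) hqmin0
    τ.cast_nonneg hηbound
  have key := fejer_scalar_inequality (div_pos hη hn) (div_pos hlmax0 hlmin0) hqmin0
    τ.cast_nonneg (Mnorm2_nonneg hpsd S) hc hstep hR (inv_div c (η / n) ▸ hP)
  have hZnext_sub : ∀ i, Znext i - Zstar = (Z k - Zstar) - α i • blockRestrict b i S :=
    fun i => by rw [hZnext]; abel
  have hZk_sub : ∀ i, Z k - Znext i = α i • blockRestrict b i S :=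
    fun i => by rw [hZnext, sub_sub_cancel]
  simp only [hZnext_sub, hZk_sub, mul_add, Finset.sum_add_distrib, ← Finset.sum_mul, hqsum,
    one_mul, mul_left_comm (q _), ← Finset.mul_sum]
  rw [sum_mul_Mnorm2_sub_smul (isHermitian_iff_isSymm.mp hpsd.isHermitian) hqsum hα,
    sum_blockRestrict, hshift]
  linarith

/-- **Stochastic Fejér monotonicity in the U-metric.**  Under the step-size bound
`0 < η < n qmin / (2τ√(κ qmin) + κ)` with `κ = lmax/lmin` and `c = √(qmin/κ)`,
the conditional expectation of the squared U-distance of the stacked iterate to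
any fixed point `Z*` is nonincreasing:
`Σᵢ qᵢ [ ‖Z^{k+1,i} - Z*‖²_M + c Σ_{d=k+1-τ}^{k-1} (d-(k+1-τ)+1)‖Z^d - Z^{d+1}‖²_M
        + c τ ‖Z^k - Z^{k+1,i}‖²_M ]
  ≤ ‖Z^k - Z*‖²_M + c Σ_{d=k-τ}^{k-1} (d-(k-τ)+1)‖Z^d - Z^{d+1}‖²_M`. -/
theorem stochastic_fejer_monotonicity (N p n : ℕ)
    (M : Matrix (Fin N) (Fin N) ℝ) (hM : M.PosDef)
    (lmax lmin : ℝ)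
    (hlmax : IsGreatest (Set.range hM.isHermitian.eigenvalues) lmax)
    (hlmin : IsLeast (Set.range hM.isHermitian.eigenvalues) lmin)
    (b : Fin N → Fin n) (hb : Function.Surjective b)
    (T : Matrix (Fin N) (Fin p) ℝ → Matrix (Fin N) (Fin p) ℝ)
    (hT : ∀ X Y : Matrix (Fin N) (Fin p) ℝ,
      Mnorm2 M (T X - T Y) ≤ Mnorm2 M (X - Y))
    (Zstar : Matrix (Fin N) (Fin p) ℝ) (hfix : T Zstar = Zstar)
    (q : Fin n → ℝ) (hq : ∀ i, 0 < q i) (hqsum : ∑ i, q i = 1)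
    (qmin : ℝ) (hqmin : IsLeast (Set.range q) qmin)
    (τ k : ℕ) (hτ : 1 ≤ τ) (hτk : τ ≤ k)
    (Z : ℕ → Matrix (Fin N) (Fin p) ℝ)
    (J : Finset ℕ) (hJ : J ⊆ Finset.Ico (k - τ) k)
    (Zhat : Matrix (Fin N) (Fin p) ℝ)
    (hZhat : Zhat = Z k + ∑ d ∈ J, (Z d - Z (d + 1)))
    (η : ℝ) (hη : 0 < η)
    (hηbound : η < (n : ℝ) * qmin /
      (2 * (τ : ℝ) * Real.sqrt ((lmax / lmin) * qmin) + lmax / lmin))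
    (c : ℝ) (hc : c = Real.sqrt (qmin / (lmax / lmin)))
    (Znext : Fin n → Matrix (Fin N) (Fin p) ℝ)
    (hZnext : ∀ i, Znext i = Z k - (η / ((n : ℝ) * q i)) • blockRestrict b i (Zhat - T Zhat)) :
    ∑ i, q i *
        (Mnorm2 M (Znext i - Zstar)
          + c * ∑ d ∈ Finset.Ico (k + 1 - τ) k,
              ((d - (k + 1 - τ) + 1 : ℕ) : ℝ) * Mnorm2 M (Z d - Z (d + 1))
          + c * (τ : ℝ) * Mnorm2 M (Z k - Znext i))
      ≤ Mnorm2 M (Z k - Zstar)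
        + c * ∑ d ∈ Finset.Ico (k - τ) k,
            ((d - (k - τ) + 1 : ℕ) : ℝ) * Mnorm2 M (Z d - Z (d + 1)) :=
  stochastic_fejer_monotonicity_general N p n M hM lmax lmin hlmax hlmin b T hT Zstar hfix q hq
    hqsum qmin hqmin τ k hτk Z J hJ Zhat hZhat η hη hηbound c hc Znext hZnext
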